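/- If a graph G is 3-regular, has girth at least 6, and for every vertex v with neighbors v1, v2, v3 and further neighbors w_i, w_i' of v_i, any precoloring of the edges v1w1, v2w2, v3w3 from their lists extends to a strong list edge coloring of G − v, then combined with the counting claims (1)–(5) on the lists B_i = L(v_iw_i) ∪ L(v_iw_i') and L_i = L(vv_i) of sizes ≥ 11, G is strongly L-edge-colorable — contradicting minimality; hence no minimal counterexample to χ'_{s,l}(G) ≤ 11 for subcubic G exists. -/

import Mathlib

def StrongSees {V : Type*} (G : SimpleGraph V) (e e' : Sym2 V) : Prop :=
  (∃ v, v ∈ e ∧ v ∈ e') ∨ (∃ u v, u ∈ e ∧ v ∈ e' ∧ G.Adj u v)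

def IsStrongEdgeColoring {V β : Type*} (G : SimpleGraph V) (c : Sym2 V → β) : Prop :=
  ∀ e ∈ G.edgeSet, ∀ e' ∈ G.edgeSet, e ≠ e' → StrongSees G e e' → c e ≠ c e'

def StronglyListColorable {V β : Type*} (G : SimpleGraph V) (L : Sym2 V → Finset β) : Prop :=
  ∃ c : Sym2 V → β, IsStrongEdgeColoring G c ∧ ∀ e ∈ G.edgeSet, c e ∈ L e

/-- The graph obtained from `G` by deleting the vertex `v`. -/
def deleteVertex {V : Type*} (G : SimpleGraph V) (v : V) : SimpleGraph V where
  Adj x y := G.Adj x y ∧ x ≠ v ∧ y ≠ v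
  symm := ⟨fun _ _ h => ⟨h.1.symm, h.2.2, h.2.1⟩⟩
  loopless := ⟨fun x h => G.loopless.irrefl x h.1⟩

/-!
Fix a vertex `v`. For each neighbour `u` of `v` let `B u` be the union of the lists on the two
edges at `u` pointing away from `v`, and cut `L(vu)` down to a list `l u` of exactly 11 colours.
Choose `c u ∈ B u` so that the lists `l u` together contain at most 5 of the chosen colours,
counted with multiplicity: if two of the sets `B u` share a colour, use it for both, and give the
third neighbour a colour of `B u` lying in few lists `l u`; if the `B u` are pairwise disjoint,
take in each one a colour lying in the fewest lists, which averages to at most 3.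
Precolour an edge `u x` with `c u ∈ L(ux)` at each neighbour and extend to `G − v`. Apart from
the three precoloured edges, `vu` sees at most 7 edges of `G − v`, so at least
`4 - #(l u ∩ C)` colours of `l u` stay free, where `C` is the set of chosen colours; since these
defects sum to at most 5, Hall's condition holds and the three edges at `v` get distinct free
colours.
-/

open Finset

section Transversal

variable {ι β : Type*}

theorem exists_mem_card_mul_le_sum (d : β → ℕ) {B : Finset β} (hB : B.Nonempty) :
    ∃ x ∈ B, #B * d x ≤ ∑ y ∈ B, d y := by
  obtain ⟨x, hx, hmin⟩ := B.exists_min_image d hB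
  exact ⟨x, hx, by simpa using B.card_nsmul_le_sum d (d x) hmin⟩

variable [DecidableEq β]

theorem exists_transversal_sum_le_of_pairwiseDisjoint [Nonempty β] (d : β → ℕ) {k : ℕ} (hk : 0 < k)
    (hsum : ∀ X : Finset β, ∑ x ∈ X, d x ≤ 3 * k) {N : Finset ι} (B : ι → Finset β)
    (hB : ∀ i ∈ N, k ≤ #(B i)) (hdisj : (N : Set ι).PairwiseDisjoint B) :
    ∃ c : ι → β, (∀ i ∈ N, c i ∈ B i) ∧ ∑ x ∈ N.image c, d x ≤ 3 := by
  have hmin : ∀ i ∈ N, ∃ x ∈ B i, k * d x ≤ ∑ y ∈ B i, d y := fun i hi => by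
    obtain ⟨x, hx, hle⟩ := exists_mem_card_mul_le_sum d (card_pos.mp (hk.trans_le (hB i hi)))
    exact ⟨x, hx, (Nat.mul_le_mul_right _ (hB i hi)).trans hle⟩
  choose! c hcB hc using hmin
  refine ⟨c, hcB, ?_⟩
  have : k * ∑ i ∈ N, d (c i) ≤ k * 3 := calc
    k * ∑ i ∈ N, d (c i) ≤ ∑ i ∈ N, ∑ y ∈ B i, d y := by
      rw [mul_sum]; exact sum_le_sum hc
    _ = ∑ y ∈ N.biUnion B, d y := (sum_biUnion hdisj).symm
    _ ≤ k * 3 := (hsum _).trans_eq (mul_comm _ _)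
  calc ∑ x ∈ N.image c, d x ≤ ∑ i ∈ N, d (c i) := sum_image_le_of_nonneg fun _ _ => Nat.zero_le _
    _ ≤ 3 := Nat.le_of_mul_le_mul_left this hk

theorem exists_mem_add_le_five (d : β → ℕ) (hd : ∀ x, d x ≤ 3) {k : ℕ} (hk : 0 < k)
    (hsum : ∀ X : Finset β, ∑ x ∈ X, d x ≤ 3 * k) {B : Finset β} (hB : k ≤ #B) {c₀ : β}
    (hc₀ : c₀ ∉ B) : ∃ x ∈ B, d x + d c₀ ≤ 5 := by
  obtain ⟨x, hx, hxmin⟩ := exists_mem_card_mul_le_sum d (card_pos.mp (hk.trans_le hB))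
  have : k * d x + d c₀ ≤ 3 * k := calc
    k * d x + d c₀ ≤ ∑ y ∈ B, d y + d c₀ :=
      Nat.add_le_add_right ((Nat.mul_le_mul_right _ hB).trans hxmin) _
    _ = ∑ y ∈ insert c₀ B, d y := by rw [sum_insert hc₀, add_comm]
    _ ≤ 3 * k := hsum _
  refine ⟨x, hx, ?_⟩
  have := hd c₀
  have := hd x
  rcases Nat.lt_or_ge (d x) 3 with h | h
  · omega
  · nlinarith

theorem exists_transversal_sum_le_of_mem_inter (d : β → ℕ) (hd : ∀ x, d x ≤ 3) {k : ℕ}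
    (hk : 0 < k) (hsum : ∀ X : Finset β, ∑ x ∈ X, d x ≤ 3 * k) {N : Finset ι} (hN : #N ≤ 3)
    (B : ι → Finset β) (hB : ∀ i ∈ N, k ≤ #(B i)) {i j : ι} (hi : i ∈ N) (hj : j ∈ N)
    (hij : i ≠ j) {c₀ : β} (hc₀i : c₀ ∈ B i) (hc₀j : c₀ ∈ B j) :
    ∃ c : ι → β, (∀ i ∈ N, c i ∈ B i) ∧ ∑ x ∈ N.image c, d x ≤ 5 := by
  classical
  by_cases hall : ∀ l ∈ N, c₀ ∈ B l
  · refine ⟨fun _ => c₀, hall, ?_⟩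
    calc ∑ x ∈ N.image (fun _ => c₀), d x ≤ ∑ x ∈ {c₀}, d x :=
          sum_le_sum_of_subset (image_subset_iff.mpr fun _ _ => mem_singleton_self c₀)
      _ ≤ 5 := by simpa using (hd c₀).trans (by norm_num)
  push Not at hall
  obtain ⟨l, hl, hc₀l⟩ := hall
  have hN' : N ⊆ {i, j, l} := (eq_of_subset_of_card_le (by simp [insert_subset_iff, *])
    (hN.trans (card_eq_three.mpr ⟨i, j, l, hij, by grind, by grind, rfl⟩).ge)).ge
  obtain ⟨x, hx, hx₅⟩ := exists_mem_add_le_five d hd hk hsum (hB l hl) hc₀l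
  refine ⟨fun m => if m = l then x else c₀, fun m hm => ?_, ?_⟩
  · have := hN' hm
    simp only [mem_insert, mem_singleton] at this
    rcases this with rfl | rfl | rfl <;> dsimp only <;> split_ifs <;> simp_all
  · calc ∑ y ∈ N.image (fun m => if m = l then x else c₀), d y ≤ ∑ y ∈ {x, c₀}, d y :=
          sum_le_sum_of_subset (by intro y; simp only [mem_image]; grind)
      _ ≤ d x + d c₀ := by rcases eq_or_ne x c₀ with rfl | hne <;> simp [*]
      _ ≤ 5 := hx₅

theorem sum_card_inter_eq_sum_card_filter (N : Finset ι) (L : ι → Finset β) (X : Finset β) :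
    ∑ i ∈ N, #(L i ∩ X) = ∑ x ∈ X, #{i ∈ N | x ∈ L i} := by
  simp only [card_filter]
  rw [sum_comm]
  refine sum_congr rfl fun i _ => ?_
  rw [inter_comm, ← filter_mem_eq_inter, card_filter]

theorem exists_transversal_sum_card_inter_le [Nonempty β] {k : ℕ} (hk : 0 < k) {N : Finset ι}
    (hN : #N ≤ 3) (L B : ι → Finset β) (hL : ∀ i ∈ N, #(L i) ≤ k) (hB : ∀ i ∈ N, k ≤ #(B i)) :
    ∃ c : ι → β, (∀ i ∈ N, c i ∈ B i) ∧ ∑ i ∈ N, #(L i ∩ N.image c) ≤ 5 := by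
  simp only [sum_card_inter_eq_sum_card_filter]
  have hd : ∀ x, #{i ∈ N | x ∈ L i} ≤ 3 := fun x => card_filter_le _ _ |>.trans hN
  have hsum : ∀ X : Finset β, ∑ x ∈ X, #{i ∈ N | x ∈ L i} ≤ 3 * k := fun X => calc
    _ = ∑ i ∈ N, #(L i ∩ X) := (sum_card_inter_eq_sum_card_filter N L X).symm
    _ ≤ ∑ i ∈ N, k := sum_le_sum fun i hi => (card_le_card inter_subset_left).trans (hL i hi)
    _ ≤ 3 * k := by rw [sum_const, smul_eq_mul]; exact Nat.mul_le_mul_right _ hN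
  by_cases hdisj : (N : Set ι).PairwiseDisjoint B
  · obtain ⟨c, hcB, hc⟩ := exists_transversal_sum_le_of_pairwiseDisjoint _ hk hsum B hB hdisj
    exact ⟨c, hcB, hc.trans (by norm_num)⟩
  · simp only [Set.PairwiseDisjoint, Set.Pairwise, Function.onFun, not_forall] at hdisj
    obtain ⟨i, hi, j, hj, hij, hnd⟩ := hdisj
    obtain ⟨c₀, hc₀i, hc₀j⟩ := not_disjoint_iff.mp hnd
    exact exists_transversal_sum_le_of_mem_inter _ hd hk hsum hN B hB hi hj hij hc₀i hc₀j

theorem exists_injOn_mem_of_le_card_add [Nonempty β] {N : Finset ι} (hN : #N ≤ 3)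
    (A : ι → Finset β) (k : ι → ℕ) (hA : ∀ i ∈ N, 4 ≤ #(A i) + k i) (hk : ∀ i ∈ N, k i ≤ 3)
    (hsum : ∑ i ∈ N, k i ≤ 5) :
    ∃ a : ι → β, Set.InjOn a N ∧ ∀ i ∈ N, a i ∈ A i := by
  classical
  have hall : ∀ S : Finset N, #S ≤ #(S.biUnion fun i => A i) := by
    intro S
    rcases S.eq_empty_or_nonempty with rfl | hS
    · simp
    obtain ⟨i, hiS, hmin⟩ := S.exists_min_image (fun i => k i) hS
    have hSN : #S ≤ 3 := (card_le_univ S).trans (by simpa using hN)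
    have hSk : #S * k i ≤ 5 := calc
      #S * k i ≤ ∑ j ∈ S, k j := by simpa using S.card_nsmul_le_sum _ _ hmin
      _ ≤ ∑ j : N, k j := sum_le_sum_of_subset (subset_univ S)
      _ = ∑ j ∈ N, k j := sum_coe_sort N k
      _ ≤ 5 := hsum
    have hi := hA i i.2
    have hS1 : 1 ≤ #S := card_pos.mpr hS
    calc #S ≤ #(A i) := by
          have := hk i i.2
          interval_cases h : #S <;> omega
      _ ≤ #(S.biUnion fun i => A i) := card_le_card (subset_biUnion_of_mem (fun i : N => A i) hiS)
  obtain ⟨f, hf, hfA⟩ := (all_card_le_biUnion_card_iff_exists_injective _).mp hall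
  refine ⟨fun i => if h : i ∈ N then f ⟨i, h⟩ else Classical.arbitrary β, ?_, fun i hi => ?_⟩
  · intro i hi j hj hij
    rw [mem_coe] at hi hj
    simp only [dif_pos hi, dif_pos hj] at hij
    simpa using hf hij
  · simpa [hi] using hfA ⟨i, hi⟩

theorem card_le_card_sdiff_union_add_card_inter_add_card (s t r : Finset β) :
    #s ≤ #(s \ (t ∪ r)) + #(s ∩ t) + #r :=
  calc #s = #(s \ t) + #(s ∩ t) := (card_sdiff_add_card_inter s t).symm
    _ ≤ #((s \ t) \ r) + #r + #(s ∩ t) := by gcongr; exact card_le_card_sdiff_add_card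
    _ = _ := by rw [sdiff_sdiff_left, sup_eq_union]; ring

end Transversal

section Graph

variable {V β : Type*}

theorem StrongSees.symm {G : SimpleGraph V} {e e' : Sym2 V} (h : StrongSees G e e') :
    StrongSees G e' e := by
  rcases h with ⟨x, hx, hx'⟩ | ⟨x, y, hx, hy, hxy⟩
  · exact Or.inl ⟨x, hx', hx⟩
  · exact Or.inr ⟨y, x, hy, hx, hxy.symm⟩

theorem StrongSees.deleteVertex {G : SimpleGraph V} {v : V} {e e' : Sym2 V} (he : v ∉ e)
    (he' : v ∉ e') (h : StrongSees G e e') : StrongSees (deleteVertex G v) e e' := by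
  rcases h with ⟨x, hx, hx'⟩ | ⟨x, y, hx, hy, hxy⟩
  · exact Or.inl ⟨x, hx, hx'⟩
  · exact Or.inr ⟨x, y, hx, hy, hxy, ne_of_mem_of_not_mem hx he, ne_of_mem_of_not_mem hy he'⟩

theorem mem_edgeSet_deleteVertex {G : SimpleGraph V} {v : V} {e : Sym2 V} :
    e ∈ (deleteVertex G v).edgeSet ↔ e ∈ G.edgeSet ∧ v ∉ e := by
  induction e using Sym2.ind with
  | h x y =>
    simp only [SimpleGraph.mem_edgeSet, deleteVertex, Sym2.mem_iff, not_or]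
    tauto

theorem stronglyListColorable_of_deleteVertex {G : SimpleGraph V} {L : Sym2 V → Finset β}
    {v : V} {φ : Sym2 V → β} (hφ : IsStrongEdgeColoring (deleteVertex G v) φ)
    (hφL : ∀ f ∈ (deleteVertex G v).edgeSet, φ f ∈ L f) (a : V → β)
    (ha : Set.InjOn a (G.neighborSet v)) (haL : ∀ u, G.Adj v u → a u ∈ L s(v, u))
    (hfree : ∀ u, G.Adj v u → ∀ e ∈ G.edgeSet, v ∉ e → StrongSees G s(v, u) e → φ e ≠ a u) :
    StronglyListColorable G L := by
  classical
  let c : Sym2 V → β := fun e => if h : v ∈ e then a (Sym2.Mem.other h) else φ e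
  have hc : ∀ u, c s(v, u) = a u := fun u => by
    simp only [c, dif_pos (Sym2.mem_mk_left v u)]
    congr
    exact Sym2.congr_right.mp (Sym2.other_spec _)
  have hc' : ∀ e, v ∉ e → c e = φ e := fun e he => dif_neg he
  have hat : ∀ e ∈ G.edgeSet, v ∈ e → ∃ u, G.Adj v u ∧ e = s(v, u) := fun e he hv =>
    ⟨_, by rwa [← Sym2.other_spec hv, SimpleGraph.mem_edgeSet] at he, (Sym2.other_spec hv).symm⟩
  refine ⟨c, fun e he e' he' hne hsee => ?_, fun e he => ?_⟩
  · by_cases hv : v ∈ e <;> by_cases hv' : v ∈ e'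
    · obtain ⟨u, hu, rfl⟩ := hat e he hv
      obtain ⟨u', hu', rfl⟩ := hat e' he' hv'
      rw [hc, hc]
      exact fun h => hne (congrArg _ (ha hu hu' h))
    · obtain ⟨u, hu, rfl⟩ := hat e he hv
      rw [hc, hc' e' hv']
      exact (hfree u hu e' he' hv' hsee).symm
    · obtain ⟨u, hu, rfl⟩ := hat e' he' hv'
      rw [hc, hc' e hv]
      exact hfree u hu e he hv hsee.symm
    · rw [hc' e hv, hc' e' hv']
      exact hφ e (mem_edgeSet_deleteVertex.mpr ⟨he, hv⟩) e'
        (mem_edgeSet_deleteVertex.mpr ⟨he', hv'⟩) hne (hsee.deleteVertex hv hv')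
  · by_cases hv : v ∈ e
    · obtain ⟨u, hu, rfl⟩ := hat e he hv
      exact hc u ▸ haL u hu
    · exact hc' e hv ▸ hφL e (mem_edgeSet_deleteVertex.mpr ⟨he, hv⟩)

theorem card_incidenceFinset_erase_erase [Fintype V] [DecidableEq V] {G : SimpleGraph V}
    [DecidableRel G.Adj] {x y z : V} (hy : G.Adj x y) (hz : G.Adj x z) (hyz : y ≠ z) :
    #(((G.incidenceFinset x).erase s(x, y)).erase s(x, z)) = G.degree x - 2 := by
  have hy' : s(x, y) ∈ G.incidenceFinset x := by simp [SimpleGraph.incidenceSet, hy]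
  have hz' : s(x, z) ∈ (G.incidenceFinset x).erase s(x, y) := by
    simp [SimpleGraph.incidenceSet, hz, hyz.symm, hz.ne']
  rw [card_erase_of_mem hz', card_erase_of_mem hy', SimpleGraph.card_incidenceFinset_eq_degree]
  omega

theorem card_incidenceFinset_erase [Fintype V] [DecidableEq V] {G : SimpleGraph V}
    [DecidableRel G.Adj] {x y : V} (hy : G.Adj x y) :
    #((G.incidenceFinset x).erase s(x, y)) = G.degree x - 1 := by
  rw [card_erase_of_mem (by simp [SimpleGraph.incidenceSet, hy]),
    SimpleGraph.card_incidenceFinset_eq_degree]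

theorem exists_card_le_three_of_adj [Fintype V] {G : SimpleGraph V} [DecidableRel G.Adj]
    (hdeg : ∀ x, G.degree x ≤ 3) {v : V} (w : V → V)
    (hw : ∀ x, G.Adj v x → G.Adj x (w x) ∧ w x ≠ v) :
    ∃ R : Finset (Sym2 V), #R ≤ 3 ∧ ∀ x, G.Adj v x → ∀ e ∈ G.edgeSet, x ∈ e → v ∉ e →
      e ∈ R ∨ e = s(x, w x) := by
  classical
  refine ⟨(G.neighborFinset v).biUnion
    fun x => ((G.incidenceFinset x).erase s(x, v)).erase s(x, w x), ?_, ?_⟩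
  · refine (card_biUnion_le_card_mul _ _ 1 fun x hx => ?_).trans (by simpa using hdeg v)
    rw [SimpleGraph.mem_neighborFinset] at hx
    have := hdeg x
    rw [card_incidenceFinset_erase_erase hx.symm (hw x hx).1 (hw x hx).2.symm]
    omega
  · intro x hx e he hxe hve
    refine or_iff_not_imp_right.mpr fun hew => mem_biUnion.mpr ⟨x, by simpa using hx, ?_⟩
    simp only [mem_erase, SimpleGraph.mem_incidenceFinset, SimpleGraph.incidenceSet,
      Set.mem_ofPred_eq]
    exact ⟨hew, fun h => hve (h ▸ Sym2.mem_mk_right x v), he, hxe⟩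

theorem exists_card_le_seven_of_strongSees [Fintype V] {G : SimpleGraph V} [DecidableRel G.Adj]
    (hdeg : ∀ x, G.degree x ≤ 3) {v u : V} (hu : G.Adj v u) (w : V → V)
    (hw : ∀ x, G.Adj v x → G.Adj x (w x) ∧ w x ≠ v) :
    ∃ R : Finset (Sym2 V), #R ≤ 7 ∧ ∀ e ∈ G.edgeSet, v ∉ e → StrongSees G s(v, u) e →
      e ∈ R ∨ ∃ x, G.Adj v x ∧ e = s(x, w x) := by
  classical
  obtain ⟨R₁, hR₁, hR₁near⟩ := exists_card_le_three_of_adj hdeg w hw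
  have hnear : ∀ x, G.Adj v x → ∀ e ∈ G.edgeSet, x ∈ e → v ∉ e →
      e ∈ R₁ ∨ ∃ x, G.Adj v x ∧ e = s(x, w x) := fun x hx e he hxe hve =>
    (hR₁near x hx e he hxe hve).imp_right fun hew => ⟨x, hx, hew⟩
  set R₂ := ((G.neighborFinset u).erase v).biUnion
    fun y => (G.incidenceFinset y).erase s(y, u)
  have hR₂ : #R₂ ≤ 4 := by
    refine (card_biUnion_le_card_mul _ _ 2 fun y hy => ?_).trans ?_
    · rw [mem_erase, SimpleGraph.mem_neighborFinset] at hy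
      have := hdeg y
      rw [card_incidenceFinset_erase hy.2.symm]
      omega
    · have := hdeg u
      rw [card_erase_of_mem (by simpa using hu.symm), SimpleGraph.card_neighborFinset_eq_degree]
      omega
  refine ⟨R₁ ∪ R₂, (card_union_le _ _).trans (by omega), fun e he hve hsee => ?_⟩
  rcases hsee with ⟨y, hy, hye⟩ | ⟨y, z, hy, hze, hyz⟩
  · rcases Sym2.mem_iff.mp hy with rfl | rfl
    · exact absurd hye hve
    · exact (hnear y hu e he hye hve).imp_left (mem_union_left _)
  · rcases Sym2.mem_iff.mp hy with rfl | rfl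
    · exact (hnear z hyz e he hze hve).imp_left (mem_union_left _)
    · by_cases hye : y ∈ e
      · exact (hnear y hu e he hye hve).imp_left (mem_union_left _)
      · refine Or.inl (mem_union_right _ (mem_biUnion.mpr ⟨z, ?_, ?_⟩))
        · simpa using ⟨ne_of_mem_of_not_mem hze hve, hyz⟩
        · simp only [mem_erase, SimpleGraph.mem_incidenceFinset, SimpleGraph.incidenceSet,
            Set.mem_ofPred_eq]
          exact ⟨fun h => hye (h ▸ Sym2.mem_mk_right z y), he, hze⟩

theorem stronglyListColorable_of_light_precoloring [Fintype V] [DecidableEq β]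
    {G : SimpleGraph V} [DecidableRel G.Adj] (hdeg : ∀ x, G.degree x ≤ 3)
    {L : Sym2 V → Finset β} {v : V} (l : V → Finset β) (hlL : ∀ u, G.Adj v u → l u ⊆ L s(v, u))
    (hl : ∀ u, G.Adj v u → 11 ≤ #(l u)) (w : V → V)
    (hw : ∀ x, G.Adj v x → G.Adj x (w x) ∧ w x ≠ v) (c : V → β)
    (hc : ∑ u ∈ G.neighborFinset v, #(l u ∩ (G.neighborFinset v).image c) ≤ 5)
    {φ : Sym2 V → β} (hφ : IsStrongEdgeColoring (deleteVertex G v) φ)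
    (hφL : ∀ f ∈ (deleteVertex G v).edgeSet, φ f ∈ L f)
    (hφw : ∀ u, G.Adj v u → φ s(u, w u) = c u) :
    StronglyListColorable G L := by
  have : Nonempty β := ⟨c v⟩
  set N := G.neighborFinset v
  have hN : #N ≤ 3 := (G.card_neighborFinset_eq_degree v).trans_le (hdeg v)
  have hmem : ∀ {u}, u ∈ N ↔ G.Adj v u := G.mem_neighborFinset v _
  set C := N.image c
  choose! R hR hRcover using fun u (hu : G.Adj v u) =>
    exists_card_le_seven_of_strongSees hdeg hu w hw
  obtain ⟨a, ha, haA⟩ := exists_injOn_mem_of_le_card_add hN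
    (fun u => l u \ (C ∪ (R u).image φ)) (fun u => #(l u ∩ C))
    (fun u hu => by
      have := card_le_card_sdiff_union_add_card_inter_add_card (l u) C ((R u).image φ)
      have := (card_image_le (s := R u) (f := φ)).trans (hR u (hmem.mp hu))
      have := hl u (hmem.mp hu)
      omega)
    (fun u _ => (card_le_card inter_subset_right).trans (card_image_le.trans hN)) hc
  refine stronglyListColorable_of_deleteVertex hφ hφL a (by simpa [N] using ha)
    (fun u hu => hlL u hu (mem_sdiff.mp (haA u (hmem.mpr hu))).1) fun u hu e he hve hsee => ?_
  have hfree := (mem_sdiff.mp (haA u (hmem.mpr hu))).2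
  intro hφe
  rw [← hφe] at hfree
  refine hfree (mem_union.mpr ?_)
  rcases hRcover u hu e he hve hsee with heR | ⟨x, hx, rfl⟩
  · exact Or.inr (mem_image_of_mem φ heR)
  · exact Or.inl (hφw x hx ▸ mem_image_of_mem c (hmem.mpr hx))

end Graph

theorem no_minimal_counterexample_general {V β : Type*} [Fintype V]
    (G : SimpleGraph V) [DecidableRel G.Adj]
    (hcubic : ∀ v : V, G.degree v = 3)
    (L : Sym2 V → Finset β) (hL : ∀ e ∈ G.edgeSet, 11 ≤ (L e).card)
    (hextend : ∀ (v : V) (w : V → V) (φ0 : V → β),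
      (∀ u, G.Adj v u → G.Adj u (w u) ∧ w u ≠ v ∧ φ0 u ∈ L s(u, w u)) →
      ∃ φ : Sym2 V → β, IsStrongEdgeColoring (deleteVertex G v) φ ∧
        (∀ f ∈ (deleteVertex G v).edgeSet, φ f ∈ L f) ∧
        ∀ u, G.Adj v u → φ s(u, w u) = φ0 u) :
    StronglyListColorable G L := by
  classical
  rcases isEmpty_or_nonempty V with hV | ⟨⟨v⟩⟩
  · exact ⟨fun e => isEmptyElim e, fun e => isEmptyElim e, fun e => isEmptyElim e⟩
  set N := G.neighborFinset v
  have hN : #N = 3 := hcubic v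
  have hmem : ∀ {u}, u ∈ N ↔ G.Adj v u := G.mem_neighborFinset v _
  set B := fun u => ((G.neighborFinset u).erase v).biUnion fun x => L s(u, x)
  have hB : ∀ u ∈ N, 11 ≤ #(B u) := fun u hu => by
    obtain ⟨x, hx⟩ : ((G.neighborFinset u).erase v).Nonempty := card_pos.mp (by
      rw [card_erase_of_mem (by simpa using (hmem.mp hu).symm)]; simp [hcubic])
    exact (hL s(u, x) (by simpa using (mem_erase.mp hx).2)).trans
      (card_le_card (subset_biUnion_of_mem (fun x => L s(u, x)) hx))
  have : Nonempty β := by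
    obtain ⟨u, hu⟩ : N.Nonempty := card_pos.mp (by omega)
    exact (card_pos.mp ((hB u hu).trans_lt' (by norm_num))).to_type
  choose! l hlL hl using fun u (hu : u ∈ N) =>
    exists_subset_card_eq (hL s(v, u) (G.mem_edgeSet.mpr (hmem.mp hu)))
  obtain ⟨c, hcB, hc⟩ := exists_transversal_sum_card_inter_le (by norm_num) hN.le l B
    (fun u hu => (hl u hu).le) hB
  have hprecolor : ∀ u ∈ N, ∃ x, G.Adj u x ∧ x ≠ v ∧ c u ∈ L s(u, x) := fun u hu => by
    obtain ⟨x, hx, hcx⟩ := mem_biUnion.mp (hcB u hu)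
    obtain ⟨hxv, hux⟩ := mem_erase.mp hx
    exact ⟨x, (G.mem_neighborFinset _ _).mp hux, hxv, hcx⟩
  choose! w hw using hprecolor
  obtain ⟨φ, hφ, hφL, hφw⟩ := hextend v w c fun u hu => hw u (hmem.mpr hu)
  exact stronglyListColorable_of_light_precoloring (fun x => (hcubic x).le) l
    (fun u hu => hlL u (hmem.mpr hu)) (fun u hu => (hl u (hmem.mpr hu)).ge) w
    (fun u hu => (hw u (hmem.mpr hu)).imp_right And.left) c hc hφ hφL hφw

/-- If `G` is cubic with girth at least 6, all lists have size at least 11, and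
for every vertex `v` every precoloring (from the lists) of one edge `u–w u`
at each neighbor `u` of `v` pointing away from `v` extends to a strong list
edge coloring of `G − v`, then `G` is strongly `L`-edge-colorable; hence there
is no minimal counterexample to `χ'_{s,l}(G) ≤ 11` for subcubic graphs. -/
theorem no_minimal_counterexample {V β : Type*} [Fintype V]
    (G : SimpleGraph V) [DecidableRel G.Adj]
    (hcubic : ∀ v : V, G.degree v = 3) (hgirth : 6 ≤ G.girth)
    (L : Sym2 V → Finset β) (hL : ∀ e ∈ G.edgeSet, 11 ≤ (L e).card)
    (hextend : ∀ (v : V) (w : V → V) (φ0 : V → β),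
      (∀ u, G.Adj v u → G.Adj u (w u) ∧ w u ≠ v ∧ φ0 u ∈ L s(u, w u)) →
      ∃ φ : Sym2 V → β, IsStrongEdgeColoring (deleteVertex G v) φ ∧
        (∀ f ∈ (deleteVertex G v).edgeSet, φ f ∈ L f) ∧
        ∀ u, G.Adj v u → φ s(u, w u) = φ0 u) :
    StronglyListColorable G L :=
  no_minimal_counterexample_general G hcubic L hL hextend
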